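/- arXiv:2507.02394 — 4 statements merged into one kernel-verified Lean document; each statement's English description precedes it below -/
import Mathlib

section
/- (Freedman's inequality.) Let X_0, X_1, …, X_n be a real-valued martingale with respect to a filtration (F_i)_{i=0,…,n} on a probability space, with X_0 = 0. Suppose there exist M > 0 and σ² > 0 such that, almost surely, |X_i − X_{i−1}| ≤ M for every 1 ≤ i ≤ n, and the predictable quadratic variation satisfies ∑_{j=1}^i E[(X_j − X_{j−1})² | F_{j−1}] ≤ σ² for every 1 ≤ i ≤ n. Then for every λ > 0, P(max_{i∈[n]} |X_i| > λ) ≤ 2·exp(−(λ²/2)/(σ² + M·λ/3)). -/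
/-!
For `0 ≤ θ` with `θ M < 3`, the bound `exp u ≤ 1 + u + u² / (2 (1 - θ M / 3))` for `|u| ≤ θ M`,
applied to the increments, makes `exp (θ X i - c V i)` a nonnegative supermartingale, where `V` is
the predictable quadratic variation and `c = θ² / (2 (1 - θ M / 3))`. On the event
`{l < X i, V i ≤ σ²}` it exceeds `exp (θ l - c σ²)`, so the maximal inequality for nonnegative
supermartingales (optional stopping at the hitting time) bounds the probability of that event by
`exp (-(θ l - c σ²))`; the choice `θ = l / (σ² + M l / 3)` turns the exponent into
`(l² / 2) / (σ² + M l / 3)`. Applying this to `X` and `-X` gives the factor `2`; a martingale given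
only up to time `n` is first frozen at `n`.
-/

open MeasureTheory Finset

theorem Nat.two_mul_three_pow_le_factorial_add_two (k : ℕ) : 2 * 3 ^ k ≤ (k + 2).factorial := by
  induction k with
  | zero => simp [Nat.factorial]
  | succ k ih =>
    rw [Nat.factorial_succ, pow_succ]
    nlinarith

theorem Real.exp_le_one_add_add_sq_div {u v : ℝ} (huv : |u| ≤ v) (hv : v < 3) :
    Real.exp u ≤ 1 + u + u ^ 2 / (2 * (1 - v / 3)) := by
  have hv0 : 0 ≤ v := (abs_nonneg u).trans huv
  have hexp : HasSum (fun k : ℕ => u ^ (k + 2) / (k + 2).factorial) (Real.exp u - (1 + u)) := by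
    have := (hasSum_nat_add_iff' 2).2 (Real.exp_eq_exp_ℝ ▸ NormedSpace.expSeries_div_hasSum_exp u)
    simpa [sum_range_succ] using this
  have hgeom : HasSum (fun k : ℕ => u ^ 2 / 2 * (v / 3) ^ k) (u ^ 2 / 2 * (1 - v / 3)⁻¹) :=
    (hasSum_geometric_of_lt_one (by positivity) (by linarith)).mul_left _
  have hterm (k : ℕ) : u ^ (k + 2) / (k + 2).factorial ≤ u ^ 2 / 2 * (v / 3) ^ k := by
    have hfact : (2 * 3 ^ k : ℝ) ≤ (k + 2).factorial := by
      exact_mod_cast Nat.two_mul_three_pow_le_factorial_add_two k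
    have hpow : u ^ k ≤ v ^ k := calc
      u ^ k ≤ |u| ^ k := by rw [← abs_pow]; exact le_abs_self _
      _ ≤ v ^ k := by gcongr
    calc u ^ (k + 2) / (k + 2).factorial ≤ u ^ 2 * v ^ k / (2 * 3 ^ k) := by
          rw [pow_add, mul_comm (u ^ k)]
          gcongr
    _ = u ^ 2 / 2 * (v / 3) ^ k := by rw [div_pow]; field_simp
  have htail := hasSum_le hterm hexp hgeom
  rw [← div_eq_mul_inv, div_div] at htail
  linarith

namespace MeasureTheory

variable {Ω : Type*} {m m0 : MeasurableSpace Ω} {μ : Measure Ω}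

theorem integrable_exp_mul_of_ae_abs_le [IsFiniteMeasure μ] {D : Ω → ℝ} {M θ : ℝ}
    (hD_meas : AEStronglyMeasurable D μ) (hD : ∀ᵐ ω ∂μ, |D ω| ≤ M) (hθ : 0 ≤ θ) :
    Integrable (fun ω => Real.exp (θ * D ω)) μ := by
  refine Integrable.of_bound (Real.continuous_exp.comp_aestronglyMeasurable
    (hD_meas.const_mul θ)) (Real.exp (θ * M)) ?_
  filter_upwards [hD] with ω h
  rw [Real.norm_eq_abs, Real.abs_exp, Real.exp_le_exp]
  exact mul_le_mul_of_nonneg_left (le_abs_self _ |>.trans h) hθ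

theorem condExp_exp_mul_le_exp_condExp_sq [IsFiniteMeasure μ] (hm : m ≤ m0) {D : Ω → ℝ}
    {M θ : ℝ}
    (hD_meas : AEStronglyMeasurable D μ) (hD : ∀ᵐ ω ∂μ, |D ω| ≤ M) (hmean : μ[D|m] =ᵐ[μ] 0)
    (hθ : 0 ≤ θ) (hθM : θ * M < 3) :
    μ[fun ω => Real.exp (θ * D ω)|m] ≤ᵐ[μ]
      fun ω => Real.exp (θ ^ 2 / (2 * (1 - θ * M / 3)) * μ[D ^ 2|m] ω) := by
  set c := θ ^ 2 / (2 * (1 - θ * M / 3))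
  have hD_int : Integrable D μ := Integrable.of_bound hD_meas M (by simpa using hD)
  have hD2_int : Integrable (D ^ 2) μ := by
    refine Integrable.of_bound (hD_meas.pow 2) (M ^ 2) ?_
    filter_upwards [hD] with ω h
    simpa [sq_abs] using pow_le_pow_left₀ (abs_nonneg _) h 2
  have hquad : (fun ω => Real.exp (θ * D ω)) ≤ᵐ[μ] 1 + θ • D + c • D ^ 2 := by
    filter_upwards [hD] with ω h
    have := Real.exp_le_one_add_add_sq_div (u := θ * D ω) (v := θ * M)
      (by rw [abs_mul, abs_of_nonneg hθ]; gcongr) hθM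
    simp only [Pi.add_apply, Pi.one_apply, Pi.smul_apply, smul_eq_mul, Pi.pow_apply]
    convert this using 2; ring
  have h1_int : Integrable (1 : Ω → ℝ) μ := integrable_const 1
  have hlin : μ[1 + θ • D + c • D ^ 2|m] =ᵐ[μ] 1 + θ • μ[D|m] + c • μ[D ^ 2|m] := by
    filter_upwards [condExp_add (h1_int.add (hD_int.smul θ)) (hD2_int.smul c) m,
      condExp_add h1_int (hD_int.smul θ) m, condExp_smul θ D m,
      condExp_smul c (D ^ 2) m] with ω h2 h3 h4 h5
    simp only [Pi.add_apply, Pi.smul_apply] at h2 h3 h4 h5 ⊢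
    rw [h2, h3, h4, h5, show μ[(1 : Ω → ℝ)|m] = 1 from condExp_const hm (1 : ℝ)]
  filter_upwards [condExp_mono (integrable_exp_mul_of_ae_abs_le hD_meas hD hθ)
    ((h1_int.add (hD_int.smul θ)).add (hD2_int.smul c)) hquad, hlin, hmean] with ω h1 h2 h3
  rw [h2] at h1
  simp only [Pi.add_apply, Pi.one_apply, Pi.smul_apply, smul_eq_mul, h3, Pi.zero_apply] at h1
  linarith [Real.add_one_le_exp (c * μ[D ^ 2|m] ω)]

noncomputable def predictableQuadVar (μ : Measure Ω) (ℱ : Filtration ℕ m0) (X : ℕ → Ω → ℝ) (i : ℕ) :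
    Ω → ℝ :=
  fun ω => ∑ j ∈ Icc 1 i, (μ[fun ω' => (X j ω' - X (j - 1) ω') ^ 2|ℱ (j - 1)]) ω

section predictableQuadVar

variable {ℱ : Filtration ℕ m0} {X : ℕ → Ω → ℝ}

@[simp]
theorem predictableQuadVar_zero : predictableQuadVar μ ℱ X 0 = 0 := by
  ext ω; simp [predictableQuadVar]

theorem predictableQuadVar_succ (i : ℕ) :
    predictableQuadVar μ ℱ X (i + 1) =
      predictableQuadVar μ ℱ X i + μ[(X (i + 1) - X i) ^ 2|ℱ i] := by
  ext ω
  simp only [predictableQuadVar, sum_Icc_succ_top (Nat.le_add_left 1 i), Pi.add_apply]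
  rfl

theorem predictableQuadVar_nonneg (i : ℕ) : 0 ≤ᵐ[μ] predictableQuadVar μ ℱ X i := by
  have hterm (j : ℕ) : 0 ≤ᵐ[μ] μ[fun ω => (X j ω - X (j - 1) ω) ^ 2|ℱ (j - 1)] :=
    condExp_nonneg (ae_of_all _ fun ω => sq_nonneg _)
  filter_upwards [ae_all_iff.2 hterm] with ω hω
  exact sum_nonneg fun j _ => hω j

theorem stronglyMeasurable_predictableQuadVar {i k : ℕ} (hik : i ≤ k + 1) :
    StronglyMeasurable[ℱ k] (predictableQuadVar μ ℱ X i) :=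
  Finset.stronglyMeasurable_fun_sum _ fun j hj =>
    stronglyMeasurable_condExp.mono (ℱ.mono (by simp only [mem_Icc] at hj; omega))

theorem predictableQuadVar_neg : predictableQuadVar μ ℱ (-X) = predictableQuadVar μ ℱ X := by
  ext i ω
  refine sum_congr rfl fun j _ => ?_
  congr 2
  ext ω'
  simp only [Pi.neg_apply]
  ring

theorem predictableQuadVar_comp_min {n i : ℕ} (hi : i ≤ n) :
    predictableQuadVar μ ℱ (fun k => X (min k n)) i = predictableQuadVar μ ℱ X i := by
  ext ω
  refine sum_congr rfl fun j hj => ?_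
  simp only [mem_Icc] at hj
  simp only [min_eq_left (hj.2.trans hi), min_eq_left ((j.sub_le 1).trans (hj.2.trans hi))]

end predictableQuadVar

theorem ae_abs_le_mul_of_abs_sub_le {X : ℕ → Ω → ℝ} {M : ℝ} (hX0 : X 0 = 0)
    (hdiff : ∀ i, ∀ᵐ ω ∂μ, |X (i + 1) ω - X i ω| ≤ M) (i : ℕ) :
    ∀ᵐ ω ∂μ, |X i ω| ≤ i * M := by
  induction i with
  | zero => simp [hX0]
  | succ i ih =>
    filter_upwards [ih, hdiff i] with ω h1 h2
    calc |X (i + 1) ω| = |X i ω + (X (i + 1) ω - X i ω)| := by rw [add_sub_cancel]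
      _ ≤ |X i ω| + |X (i + 1) ω - X i ω| := abs_add_le _ _
      _ ≤ (i + 1 : ℕ) * M := by push_cast; linarith

theorem Martingale.condExp_sub_ae_eq_zero {ι E : Type*} [Preorder ι] [NormedAddCommGroup E]
    [NormedSpace ℝ E] [CompleteSpace E] {ℱ : Filtration ι m0} [SigmaFiniteFiltration μ ℱ]
    {X : ι → Ω → E} (hX : Martingale X ℱ μ) {i j : ι} (hij : i ≤ j) : μ[X j - X i|ℱ i] =ᵐ[μ] 0 := by
  filter_upwards [condExp_sub (hX.integrable j) (hX.integrable i) (ℱ i), hX.condExp_ae_eq hij]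
    with ω h1 h2
  rw [h1, Pi.sub_apply, h2, condExp_of_stronglyMeasurable (ℱ.le i) (hX.stronglyMeasurable i)
    (hX.integrable i), sub_self, Pi.zero_apply]

theorem Martingale.supermartingale_exp_sub_predictableQuadVar [IsFiniteMeasure μ]
    {ℱ : Filtration ℕ m0} {X : ℕ → Ω → ℝ} {M θ : ℝ} (hX : Martingale X ℱ μ) (hX0 : X 0 = 0)
    (hdiff : ∀ i, ∀ᵐ ω ∂μ, |X (i + 1) ω - X i ω| ≤ M) (hθ : 0 ≤ θ) (hθM : θ * M < 3) :
    Supermartingale (fun i ω => Real.exp (θ * X i ω -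
      θ ^ 2 / (2 * (1 - θ * M / 3)) * predictableQuadVar μ ℱ X i ω)) ℱ μ := by
  set c := θ ^ 2 / (2 * (1 - θ * M / 3))
  have hc : 0 ≤ c := div_nonneg (sq_nonneg θ) (by linarith)
  set V := predictableQuadVar μ ℱ X
  have hmeas {i j : ℕ} (hj : j ≤ i + 1) :
      StronglyMeasurable[ℱ i] fun ω => Real.exp (θ * X i ω - c * V j ω) :=
    Real.continuous_exp.comp_stronglyMeasurable
      ((stronglyMeasurable_const.mul (hX.stronglyMeasurable i)).sub
        (stronglyMeasurable_const.mul (stronglyMeasurable_predictableQuadVar hj)))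
  have hbound (i j : ℕ) : ∀ᵐ ω ∂μ, ‖Real.exp (θ * X i ω - c * V j ω)‖ ≤ Real.exp (θ * (i * M)) := by
    filter_upwards [ae_abs_le_mul_of_abs_sub_le hX0 hdiff i, predictableQuadVar_nonneg j]
      with ω hXi hVj
    rw [Real.norm_eq_abs, Real.abs_exp, Real.exp_le_exp]
    nlinarith [mul_le_mul_of_nonneg_left (le_abs_self (X i ω) |>.trans hXi) hθ,
      mul_nonneg hc hVj]
  have hint (i j : ℕ) (hj : j ≤ i + 1) : Integrable (fun ω => Real.exp (θ * X i ω - c * V j ω)) μ :=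
    Integrable.of_bound ((hmeas hj).mono (ℱ.le i)).aestronglyMeasurable _ (hbound i j)
  refine supermartingale_nat (fun i => hmeas (by omega)) (fun i => hint i i (by omega)) fun i => ?_
  have hfactor : (fun ω => Real.exp (θ * X (i + 1) ω - c * V (i + 1) ω)) =
      (fun ω => Real.exp (θ * X i ω - c * V (i + 1) ω)) *
        fun ω => Real.exp (θ * (X (i + 1) - X i) ω) := by
    ext ω
    rw [Pi.mul_apply, ← Real.exp_add, Pi.sub_apply]
    ring_nf
  have hincr : ∀ᵐ ω ∂μ, |(X (i + 1) - X i) ω| ≤ M := hdiff i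
  have hΔ_meas : AEStronglyMeasurable (X (i + 1) - X i) μ :=
    ((hX.integrable _).sub (hX.integrable _)).aestronglyMeasurable
  filter_upwards [hfactor ▸ condExp_stronglyMeasurable_mul_of_bound (ℱ.le i) (hmeas le_rfl)
      (integrable_exp_mul_of_ae_abs_le hΔ_meas hincr hθ) _ (hbound i (i + 1)),
    condExp_exp_mul_le_exp_condExp_sq (ℱ.le i) hΔ_meas hincr
      (hX.condExp_sub_ae_eq_zero i.le_succ) hθ hθM]
    with ω h1 h2
  have hVsucc : V (i + 1) ω = V i ω + μ[(X (i + 1) - X i) ^ 2|ℱ i] ω :=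
    congrFun (predictableQuadVar_succ i) ω
  refine h1.trans_le ?_
  rw [Pi.mul_apply]
  calc _ ≤ Real.exp (θ * X i ω - c * V (i + 1) ω) *
        Real.exp (c * μ[(X (i + 1) - X i) ^ 2|ℱ i] ω) := by gcongr
    _ = Real.exp (θ * X i ω - c * V i ω) := by rw [← Real.exp_add, hVsucc]; ring_nf

theorem Supermartingale.maximal_ineq [IsFiniteMeasure μ] {𝒢 : Filtration ℕ m0} {S : ℕ → Ω → ℝ}
    (hS : Supermartingale S 𝒢 μ) (hnonneg : 0 ≤ S) (ε : ℝ) (n : ℕ) :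
    ε * μ.real {ω | ∃ k ≤ n, ε ≤ S k ω} ≤ ∫ ω, S 0 ω ∂μ := by
  set τ : Ω → ℕ∞ := fun ω => (hittingBtwn S {y | ε ≤ y} 0 n ω : ℕ)
  have hτ : IsStoppingTime 𝒢 τ :=
    hS.stronglyAdapted.adapted.isStoppingTime_hittingBtwn measurableSet_Ici
  have hτ_le (ω : Ω) : τ ω ≤ n := by simpa [τ] using hittingBtwn_le (u := S) ω
  have hstopped : ∫ ω, stoppedValue S τ ω ∂μ ≤ ∫ ω, S 0 ω ∂μ := by
    have := hS.neg.expected_stoppedValue_mono (isStoppingTime_const 𝒢 0) hτ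
      (fun ω => zero_le) hτ_le
    simpa [stoppedValue, integral_neg] using this
  have hsub : {ω | ∃ k ≤ n, ε ≤ S k ω} ⊆ {ω | ε ≤ stoppedValue S τ ω} := by
    rintro ω ⟨k, hk, hSk⟩
    exact stoppedValue_hittingBtwn_mem ⟨k, ⟨Nat.zero_le k, hk⟩, hSk⟩
  rcases lt_or_ge ε 0 with hε | hε
  · exact (mul_nonpos_of_nonpos_of_nonneg hε.le measureReal_nonneg).trans
      (integral_nonneg (hnonneg 0))
  calc ε * μ.real {ω | ∃ k ≤ n, ε ≤ S k ω}
      ≤ ε * μ.real {ω | ε ≤ stoppedValue S τ ω} := by gcongr; finiteness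
    _ ≤ ∫ ω, stoppedValue S τ ω ∂μ :=
        mul_meas_ge_le_integral_of_nonneg (ae_of_all _ fun ω => hnonneg _ ω)
          (integrable_stoppedValue ℕ hτ hS.integrable hτ_le) ε
    _ ≤ ∫ ω, S 0 ω ∂μ := hstopped

theorem Martingale.measure_exists_lt_and_predictableQuadVar_le [IsProbabilityMeasure μ]
    {ℱ : Filtration ℕ m0} {X : ℕ → Ω → ℝ} {M σ2 l : ℝ} (hX : Martingale X ℱ μ) (hX0 : X 0 = 0)
    (hdiff : ∀ i, ∀ᵐ ω ∂μ, |X (i + 1) ω - X i ω| ≤ M) (hM : 0 ≤ M) (hσ2 : 0 < σ2) (hl : 0 ≤ l)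
    (n : ℕ) :
    μ {ω | ∃ i ≤ n, l < X i ω ∧ predictableQuadVar μ ℱ X i ω ≤ σ2} ≤
      ENNReal.ofReal (Real.exp (-(l ^ 2 / 2) / (σ2 + M * l / 3))) := by
  have hden : 0 < σ2 + M * l / 3 := by positivity
  set θ := l / (σ2 + M * l / 3)
  have hθM : θ * M < 3 := by
    rw [div_mul_eq_mul_div, div_lt_iff₀ hden]; linarith
  set c := θ ^ 2 / (2 * (1 - θ * M / 3))
  have hc : 0 ≤ c := div_nonneg (sq_nonneg θ) (by linarith)
  have hS := hX.supermartingale_exp_sub_predictableQuadVar hX0 hdiff (by positivity) hθM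
  have hexponent : θ * l - c * σ2 = l ^ 2 / 2 / (σ2 + M * l / 3) := by
    have : 1 - θ * M / 3 = σ2 / (σ2 + M * l / 3) := by simp only [θ]; field_simp; ring
    simp only [c, this, θ]
    field_simp
    ring
  have hsub : {ω | ∃ i ≤ n, l < X i ω ∧ predictableQuadVar μ ℱ X i ω ≤ σ2} ⊆
      {ω | ∃ k ≤ n, Real.exp (θ * l - c * σ2) ≤
        Real.exp (θ * X k ω - c * predictableQuadVar μ ℱ X k ω)} := by
    rintro ω ⟨i, hi, hXi, hVi⟩
    refine ⟨i, hi, Real.exp_le_exp.2 ?_⟩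
    nlinarith [mul_le_mul_of_nonneg_left hXi.le (by positivity : 0 ≤ θ),
      mul_le_mul_of_nonneg_left hVi hc]
  have hmax := hS.maximal_ineq (fun i ω => (Real.exp_pos _).le) (Real.exp (θ * l - c * σ2)) n
  simp only [hX0, predictableQuadVar_zero, Pi.zero_apply, mul_zero, sub_zero, Real.exp_zero,
    integral_const, probReal_univ, smul_eq_mul, mul_one] at hmax
  refine (measure_mono hsub).trans ?_
  rw [← ofReal_measureReal (measure_ne_top _ _), neg_div, ← hexponent, Real.exp_neg]
  gcongr
  rw [inv_eq_one_div, le_div_iff₀ (Real.exp_pos _), mul_comm]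
  exact hmax

theorem Martingale.measure_exists_lt_abs_and_predictableQuadVar_le [IsProbabilityMeasure μ]
    {ℱ : Filtration ℕ m0} {X : ℕ → Ω → ℝ} {M σ2 l : ℝ} (hX : Martingale X ℱ μ) (hX0 : X 0 = 0)
    (hdiff : ∀ i, ∀ᵐ ω ∂μ, |X (i + 1) ω - X i ω| ≤ M) (hM : 0 ≤ M) (hσ2 : 0 < σ2) (hl : 0 ≤ l)
    (n : ℕ) :
    μ {ω | ∃ i ≤ n, l < |X i ω| ∧ predictableQuadVar μ ℱ X i ω ≤ σ2} ≤
      ENNReal.ofReal (2 * Real.exp (-(l ^ 2 / 2) / (σ2 + M * l / 3))) := by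
  have hdiff_neg (i : ℕ) : ∀ᵐ ω ∂μ, |(-X) (i + 1) ω - (-X) i ω| ≤ M := by
    filter_upwards [hdiff i] with ω h
    simpa only [Pi.neg_apply, neg_sub_neg, abs_sub_comm] using h
  have hsub : {ω | ∃ i ≤ n, l < |X i ω| ∧ predictableQuadVar μ ℱ X i ω ≤ σ2} ⊆
      {ω | ∃ i ≤ n, l < X i ω ∧ predictableQuadVar μ ℱ X i ω ≤ σ2} ∪
        {ω | ∃ i ≤ n, l < (-X) i ω ∧ predictableQuadVar μ ℱ (-X) i ω ≤ σ2} := by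
    rintro ω ⟨i, hi, hXi, hVi⟩
    rw [predictableQuadVar_neg]
    rcases lt_abs.1 hXi with h | h
    exacts [Or.inl ⟨i, hi, h, hVi⟩, Or.inr ⟨i, hi, h, hVi⟩]
  calc _ ≤ _ := measure_mono hsub
    _ ≤ _ := measure_union_le _ _
    _ ≤ ENNReal.ofReal (Real.exp (-(l ^ 2 / 2) / (σ2 + M * l / 3))) +
          ENNReal.ofReal (Real.exp (-(l ^ 2 / 2) / (σ2 + M * l / 3))) :=
        add_le_add (hX.measure_exists_lt_and_predictableQuadVar_le hX0 hdiff hM hσ2 hl n)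
          (hX.neg.measure_exists_lt_and_predictableQuadVar_le (by simp [hX0]) hdiff_neg hM hσ2 hl n)
    _ = _ := by rw [← ENNReal.ofReal_add (by positivity) (by positivity), two_mul]

theorem martingale_comp_min [IsFiniteMeasure μ] {ℱ : Filtration ℕ m0} {X : ℕ → Ω → ℝ} {n : ℕ}
    (hadapted : ∀ i ≤ n, Measurable[ℱ i] (X i)) (hint : ∀ i ≤ n, Integrable (X i) μ)
    (hmart : ∀ i < n, μ[X (i + 1)|ℱ i] =ᵐ[μ] X i) :
    Martingale (fun i => X (min i n)) ℱ μ := by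
  have hmeas (i : ℕ) : StronglyMeasurable[ℱ i] (X (min i n)) :=
    (hadapted _ (min_le_right i n)).stronglyMeasurable.mono (ℱ.mono (min_le_left i n))
  refine martingale_nat hmeas (fun i => hint _ (min_le_right i n)) fun i => ?_
  rcases lt_or_ge i n with hi | hi
  · rw [min_eq_left hi.le, min_eq_left hi]
    exact (hmart i hi).symm
  · rw [min_eq_right hi, min_eq_right (hi.trans i.le_succ)]
    exact (condExp_of_stronglyMeasurable (ℱ.le i) (min_eq_right hi ▸ hmeas i)
      (hint n le_rfl)).symm.eventuallyEq

end MeasureTheory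

/-- **Freedman's inequality.** Let `X 0, X 1, …, X n` be a real-valued martingale with respect
to the filtration `ℱ`, with `X 0 = 0`. If almost surely `|X i - X (i-1)| ≤ M` for `1 ≤ i ≤ n`
and the predictable quadratic variation `∑_{j=1}^i E[(X j - X (j-1))² | ℱ (j-1)]` is at most
`σ²` for every `1 ≤ i ≤ n`, then for every `l > 0`,
`P(max_{i ∈ [n]} |X i| > l) ≤ 2·exp(-(l²/2)/(σ² + M·l/3))`. -/
theorem freedman_inequality
    (Ω : Type) (m0 : MeasurableSpace Ω) (μ : Measure Ω) [IsProbabilityMeasure μ]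
    (n : ℕ) (ℱ : Filtration ℕ m0) (X : ℕ → Ω → ℝ) (M σ2 : ℝ)
    (hadapted : ∀ i ≤ n, Measurable[ℱ i] (X i))
    (hint : ∀ i ≤ n, Integrable (X i) μ)
    (hmart : ∀ i < n, μ[X (i + 1)|ℱ i] =ᵐ[μ] X i)
    (hX0 : ∀ ω, X 0 ω = 0)
    (hM : 0 < M) (hσ2 : 0 < σ2)
    (hdiff : ∀ i ∈ Icc 1 n, ∀ᵐ ω ∂μ, |X i ω - X (i - 1) ω| ≤ M)
    (hvar : ∀ i ∈ Icc 1 n, ∀ᵐ ω ∂μ,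
      (∑ j ∈ Icc 1 i, (μ[fun ω' => (X j ω' - X (j - 1) ω') ^ 2|ℱ (j - 1)]) ω) ≤ σ2)
    (l : ℝ) (hl : 0 < l) :
    μ {ω | ∃ i ∈ Icc 1 n, l < |X i ω|} ≤
      ENNReal.ofReal (2 * Real.exp (-(l ^ 2 / 2) / (σ2 + M * l / 3))) := by
  set Y : ℕ → Ω → ℝ := fun i => X (min i n)
  have hY : Martingale Y ℱ μ := martingale_comp_min hadapted hint hmart
  have hY0 : Y 0 = 0 := funext fun ω => by simp [Y, hX0]
  have hYdiff (i : ℕ) : ∀ᵐ ω ∂μ, |Y (i + 1) ω - Y i ω| ≤ M := by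
    rcases lt_or_ge i n with hi | hi
    · simpa [Y, min_eq_left hi.le, min_eq_left (Nat.succ_le_of_lt hi)] using
        hdiff (i + 1) (by simp; omega)
    · exact ae_of_all _ fun ω => by
        simp [Y, min_eq_right hi, min_eq_right (hi.trans i.le_succ), hM.le]
  have hYvar : ∀ᵐ ω ∂μ, ∀ i ∈ Icc 1 n, predictableQuadVar μ ℱ Y i ω ≤ σ2 :=
    (Filter.eventually_all_finset _).2 fun i hi => by
      rw [predictableQuadVar_comp_min (mem_Icc.1 hi).2]
      exact hvar i hi
  have hsub : {ω | ∃ i ∈ Icc 1 n, l < |X i ω|} ≤ᵐ[μ]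
      {ω | ∃ i ≤ n, l < |Y i ω| ∧ predictableQuadVar μ ℱ Y i ω ≤ σ2} := by
    filter_upwards [hYvar] with ω hω
    rintro ⟨i, hi, hXi⟩
    exact ⟨i, (mem_Icc.1 hi).2, by simpa [Y, min_eq_left (mem_Icc.1 hi).2] using hXi, hω i hi⟩
  exact (measure_mono_ae hsub).trans
    (hY.measure_exists_lt_abs_and_predictableQuadVar_le hY0 hYdiff hM.le hσ2 hl.le n)
end

section
/- Let H = (V, E, w) be a weighted hypergraph on a vertex set V of size n ≥ 2 and let α > 0. If the total hyperedge weight satisfies ∑_{e∈E} w_e ≥ α·(n−1), then H has an α-strong component: there exists W ⊆ V with |W| ≥ 2 such that λ(H[W]) ≥ α, i.e., every k-cut W_1,…,W_k of W (k ≥ 2) satisfies cut_{H[W]}(W_1,…,W_k)/(k−1) ≥ α. -/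
open Finset

variable {V : Type} [DecidableEq V] [Fintype V]

/-- `P` is a partition of the finite vertex set `U` into nonempty pairwise disjoint parts. -/
def IsPartitionOf (U : Finset V) (P : Finset (Finset V)) : Prop :=
  (∀ A ∈ P, A.Nonempty) ∧ (P : Set (Finset V)).PairwiseDisjoint id ∧ P.sup id = U

/-- The value of the cut `P` in the weighted hypergraph with weight function `w`
(where `w e = 0` for non-edges `e`): the total weight of hyperedges contained in the
underlying vertex set `P.sup id` but not contained in any single part of `P`. -/
def cutVal (w : Finset V → ℝ) (P : Finset (Finset V)) : ℝ :=
  ∑ e ∈ Finset.univ.filter (fun e : Finset V => e ⊆ P.sup id ∧ ∀ A ∈ P, ¬ e ⊆ A), w e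

/-- `λ(H[W])`: the minimum normalized cut value of the subhypergraph induced on `W`,
i.e. the infimum over all `k`-cuts (`k ≥ 2`) `P` of `W` of `cutVal w P / (k - 1)`. -/
noncomputable def lambdaVal (w : Finset V → ℝ) (W : Finset V) : ℝ :=
  sInf {r : ℝ | ∃ P : Finset (Finset V), IsPartitionOf W P ∧ 2 ≤ P.card ∧
    r = cutVal w P / ((P.card : ℝ) - 1)}

/-- The strength `κ_e` of a hyperedge `e`: `max_{W ⊆ V} λ(H[W ∪ e])`. -/
noncomputable def strength (w : Finset V → ℝ) (e : Finset V) : ℝ :=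
  sSup {r : ℝ | ∃ W : Finset V, r = lambdaVal w (W ∪ e)}

/-- The 2-cut value `cut_H(S, V\S)`: the total weight of hyperedges contained in neither
`S` nor its complement. -/
def cut2 (w : Finset V → ℝ) (S : Finset V) : ℝ :=
  ∑ e ∈ Finset.univ.filter (fun e : Finset V => ¬ e ⊆ S ∧ ¬ e ⊆ Sᶜ), w e


lemma sum_filter_univ_eq_sum_filter_E
    (E : Finset (Finset V)) (w : Finset V → ℝ) (hzero : ∀ e ∉ E, w e = 0)
    (p : Finset V → Prop) [DecidablePred p] :
    ∑ e ∈ Finset.univ.filter p, w e = ∑ e ∈ E.filter p, w e := by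
  rw [eq_comm]
  apply Finset.sum_subset
  · intro x hx
    simp only [mem_filter, mem_univ, true_and] at hx ⊢
    exact hx.2
  · intro x hx hxn
    simp only [mem_filter, mem_univ, true_and] at hx hxn
    exact hzero x (fun hE => hxn ⟨hE, hx⟩)

lemma key_lemma
    (E : Finset (Finset V)) (w : Finset V → ℝ) (α : ℝ)
    (hcard : ∀ e ∈ E, 2 ≤ e.card)
    (hzero : ∀ e ∉ E, w e = 0) (hα : 0 < α) :
    ∀ n : ℕ, ∀ U : Finset V, U.card ≤ n → 2 ≤ U.card →
      α * ((U.card : ℝ) - 1) ≤ ∑ e ∈ E.filter (fun e => e ⊆ U), w e →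
      ∃ W : Finset V, W ⊆ U ∧ 2 ≤ W.card ∧
        ∀ P : Finset (Finset V), IsPartitionOf W P → 2 ≤ P.card →
          α * ((P.card : ℝ) - 1) ≤ cutVal w P := by
  intro n
  induction n with
  | zero => intro U hUn hU2 _; omega
  | succ n ih =>
    intro U hUn hU2 hS
    by_cases h : ∃ P : Finset (Finset V), IsPartitionOf U P ∧ 2 ≤ P.card ∧
        cutVal w P < α * ((P.card : ℝ) - 1)
    · obtain ⟨P, hP, hPk, hcut⟩ := h
      obtain ⟨hne, hdisj, hsup⟩ := hP
      -- cutVal in terms of E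
      have hcutE : cutVal w P = ∑ e ∈ E.filter (fun e => e ⊆ U ∧ ∀ A ∈ P, ¬ e ⊆ A), w e := by
        simp only [cutVal, hsup]
        exact sum_filter_univ_eq_sum_filter_E E w hzero _
      -- split
      have hsplit : E.filter (fun e => e ⊆ U) =
          E.filter (fun e => e ⊆ U ∧ ∀ A ∈ P, ¬ e ⊆ A) ∪
            P.biUnion (fun A => E.filter (fun e => e ⊆ A)) := by
        ext e
        simp only [mem_filter, mem_union, mem_biUnion]
        constructor
        · rintro ⟨he, hU⟩
          by_cases hA : ∀ A ∈ P, ¬ e ⊆ A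
          · exact Or.inl ⟨he, hU, hA⟩
          · push_neg at hA
            obtain ⟨A, hAP, hAe⟩ := hA
            exact Or.inr ⟨A, hAP, he, hAe⟩
        · rintro (⟨he, hU, _⟩ | ⟨A, hAP, he, hAe⟩)
          · exact ⟨he, hU⟩
          · refine ⟨he, hAe.trans ?_⟩
            rw [← hsup]
            exact Finset.le_sup (f := id) hAP
      have hd1 : Disjoint (E.filter (fun e => e ⊆ U ∧ ∀ A ∈ P, ¬ e ⊆ A))
          (P.biUnion fun A => E.filter (fun e => e ⊆ A)) := by
        rw [Finset.disjoint_left]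
        intro e he1 he2
        simp only [mem_filter, mem_biUnion] at he1 he2
        obtain ⟨A, hAP, _, hAe⟩ := he2
        exact he1.2.2 A hAP hAe
      have hpw : ∀ A ∈ P, ∀ B ∈ P, A ≠ B →
          Disjoint (E.filter (fun e => e ⊆ A)) (E.filter (fun e => e ⊆ B)) := by
        intro A hA B hB hAB
        rw [Finset.disjoint_left]
        intro e heA heB
        simp only [mem_filter] at heA heB
        have hDAB : Disjoint A B := hdisj (Finset.mem_coe.mpr hA) (Finset.mem_coe.mpr hB) hAB
        have h2 : 2 ≤ e.card := hcard e heA.1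
        obtain ⟨x, hx⟩ := Finset.card_pos.mp (show 0 < e.card by omega)
        exact (Finset.disjoint_left.mp hDAB (heA.2 hx)) (heB.2 hx)
      have hsum : ∑ e ∈ E.filter (fun e => e ⊆ U), w e =
          (∑ e ∈ E.filter (fun e => e ⊆ U ∧ ∀ A ∈ P, ¬ e ⊆ A), w e)
          + ∑ A ∈ P, ∑ e ∈ E.filter (fun e => e ⊆ A), w e := by
        rw [hsplit, Finset.sum_union hd1, Finset.sum_biUnion]
        intro A hA B hB hAB
        exact hpw A (Finset.mem_coe.mp hA) B (Finset.mem_coe.mp hB) hAB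
      -- card sum
      have hcardsum : ∑ A ∈ P, A.card = U.card := by
        rw [← hsup, Finset.sup_eq_biUnion,
          Finset.card_biUnion (fun A hA B hB hAB =>
            hdisj (Finset.mem_coe.mpr hA) (Finset.mem_coe.mpr hB) hAB)]
        simp
      have hcardsumR : ∑ A ∈ P, ((A.card : ℝ) - 1) = (U.card : ℝ) - P.card := by
        rw [Finset.sum_sub_distrib]
        simp only [Finset.sum_const, nsmul_eq_mul, mul_one]
        rw [← Nat.cast_sum, hcardsum]
      have hlt : ∑ A ∈ P, α * ((A.card : ℝ) - 1) < ∑ A ∈ P, ∑ e ∈ E.filter (fun e => e ⊆ A), w e := by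
        rw [← Finset.mul_sum, hcardsumR]
        have h2k : (2 : ℝ) ≤ (P.card : ℝ) := by exact_mod_cast hPk
        nlinarith [hS, hcut, hsum, hcutE]
      obtain ⟨A, hAP, hAlt⟩ := Finset.exists_lt_of_sum_lt hlt
      -- A.card ≥ 2
      have hA1 : 1 ≤ A.card := Finset.card_pos.mpr (hne A hAP)
      have hA2 : 2 ≤ A.card := by
        by_contra hc
        have hA1' : A.card = 1 := by omega
        have hz : E.filter (fun e => e ⊆ A) = ∅ := by
          rw [Finset.filter_eq_empty_iff]
          intro e he hsub
          have := hcard e he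
          have := Finset.card_le_card hsub
          omega
        rw [hz] at hAlt
        simp only [Finset.sum_empty] at hAlt
        rw [hA1'] at hAlt
        norm_num at hAlt
      -- A ⊂ U
      have hAsub : A ⊆ U := by
        rw [← hsup]; exact Finset.le_sup (f := id) hAP
      have hAne : A ≠ U := by
        intro hAU
        obtain ⟨B, hBP, hBA⟩ := Finset.exists_mem_ne (s := P) (by omega) A
        obtain ⟨x, hxB⟩ := hne B hBP
        have hxU : x ∈ U := by
          rw [← hsup]
          exact Finset.le_sup (f := id) hBP hxB
        have hDAB : Disjoint A B := hdisj (Finset.mem_coe.mpr hAP) (Finset.mem_coe.mpr hBP) (Ne.symm hBA)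
        exact Finset.disjoint_left.mp hDAB (hAU ▸ hxU) hxB
      have hAlt' : A.card < U.card := Finset.card_lt_card (lt_of_le_of_ne hAsub hAne)
      obtain ⟨W, hWA, hW2, hWgood⟩ := ih A (by omega) hA2 (le_of_lt hAlt)
      exact ⟨W, hWA.trans hAsub, hW2, hWgood⟩
    · push_neg at h
      exact ⟨U, subset_rfl, hU2, fun P hP hPk => h P hP hPk⟩

/-- A weighted hypergraph on `n ≥ 2` vertices with total hyperedge weight at least
`α·(n-1)` has an `α`-strong component: a vertex set `W` with `|W| ≥ 2` such that
`λ(H[W]) ≥ α`, i.e. every `k`-cut (`k ≥ 2`) of `W` has normalized value at least `α`. -/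
theorem exists_strong_component_of_total_weight
    {V : Type} [DecidableEq V] [Fintype V]
    (E : Finset (Finset V)) (w : Finset V → ℝ) (α : ℝ)
    (hn : 2 ≤ Fintype.card V)
    (hcard : ∀ e ∈ E, 2 ≤ e.card) (hpos : ∀ e ∈ E, 0 < w e)
    (hzero : ∀ e ∉ E, w e = 0)
    (hα : 0 < α)
    (htot : α * ((Fintype.card V : ℝ) - 1) ≤ ∑ e ∈ E, w e) :
    ∃ W : Finset V, 2 ≤ W.card ∧ α ≤ lambdaVal w W ∧
      ∀ P : Finset (Finset V), IsPartitionOf W P → 2 ≤ P.card →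
        α ≤ cutVal w P / ((P.card : ℝ) - 1) := by
    classical
  obtain ⟨W, _, hW2, hWgood⟩ := key_lemma E w α hcard hzero hα (Fintype.card V)
      Finset.univ (by simp) (by simpa using hn)
      (by
        have h1 : Finset.univ.filter (fun e : Finset V => e ⊆ Finset.univ) = Finset.univ := by
          simp
        have h2 : ∑ e ∈ E.filter (fun e => e ⊆ (Finset.univ : Finset V)), w e = ∑ e ∈ E, w e := by
          congr 1
          simp
        rw [h2]
        simpa using htot)
  refine ⟨W, hW2, ?_, ?_⟩
  · -- lambdaVal bound
    apply le_csInf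
    · -- nonempty: partition of W into a singleton and the rest
      obtain ⟨x, hxW⟩ := Finset.card_pos.mp (by omega : 0 < W.card)
      set P0 : Finset (Finset V) := {{x}, W.erase x} with hP0
      have hxne : ({x} : Finset V) ≠ W.erase x := by
        intro h
        have : x ∈ W.erase x := h ▸ Finset.mem_singleton_self x
        simp at this
      have hcard0 : P0.card = 2 := by
        rw [hP0, Finset.card_insert_of_notMem (by simp [hxne]), Finset.card_singleton]
      have hpart : IsPartitionOf W P0 := by
        refine ⟨?_, ?_, ?_⟩
        · intro A hA
          rw [hP0] at hA
          simp only [Finset.mem_insert, Finset.mem_singleton] at hA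
          rcases hA with rfl | rfl
          · exact Finset.singleton_nonempty x
          · rw [← Finset.card_pos, Finset.card_erase_of_mem hxW]; omega
        · intro A hA B hB hAB
          rw [hP0] at hA hB
          simp only [Finset.coe_insert, Finset.coe_singleton, Set.mem_insert_iff,
            Set.mem_singleton_iff] at hA hB
          have hd : Disjoint ({x} : Finset V) (W.erase x) := by
            simp [Finset.disjoint_left]
          rcases hA with rfl | rfl <;> rcases hB with rfl | rfl <;>
            first
              | exact absurd rfl hAB
              | exact hd
              | exact hd.symm
        · rw [hP0]
          simp only [Finset.sup_insert, Finset.sup_singleton, id]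
          rw [sup_eq_union, ← Finset.insert_eq, Finset.insert_erase hxW]
      exact ⟨cutVal w P0 / ((P0.card : ℝ) - 1), P0, hpart, by rw [hcard0], rfl⟩
    · rintro r ⟨P, hP, hPk, rfl⟩
      have hk1 : (0:ℝ) < (P.card : ℝ) - 1 := by
        have : (2:ℝ) ≤ (P.card : ℝ) := by exact_mod_cast hPk
        linarith
      rw [le_div_iff₀ hk1]
      have := hWgood P hP hPk
      linarith
  · intro P hP hPk
    have hk1 : (0:ℝ) < (P.card : ℝ) - 1 := by
      have : (2:ℝ) ≤ (P.card : ℝ) := by exact_mod_cast hPk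
      linarith
    rw [le_div_iff₀ hk1]
    have := hWgood P hP hPk
    linarith
end

section
/- Let ρ ≥ 1 and n > 0 be reals, let κ* ≥ 1 be an integer, and let E' be a finite set equipped with functions κ : E' → {1, 2, …, κ*} and w : E' → ℝ_{>0} such that w_e ≥ κ_e/ρ for every e ∈ E'. For each integer κ let F_κ = {e ∈ E' : κ_e ≤ κ}, and suppose that for every integer κ ∈ {1,…,κ*}, ∑_{e ∈ F_κ} w_e ≤ n·κ·(1 + 1/ρ). Then |E'| ≤ n·(ρ+1)·(1 + ∑_{κ=1}^{κ*} 1/(κ+1)). -/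
open Finset

/-- Abel summation identity in a form avoiding `m - 1`. -/
lemma abel_aux (T : ℕ → ℝ) (hT0 : T 0 = 0) (m : ℕ) :
    ∑ k ∈ Finset.Icc 1 m, (T k - T (k - 1)) / (k : ℝ)
      = T m / ((m : ℝ) + 1) + ∑ k ∈ Finset.Icc 1 m, T k / ((k : ℝ) * ((k : ℝ) + 1)) := by
  induction m with
  | zero => simp [hT0]
  | succ m ih =>
    rw [Finset.sum_Icc_succ_top (by omega : 1 ≤ m + 1),
        Finset.sum_Icc_succ_top (by omega : 1 ≤ m + 1), ih]
    have h1 : ((m : ℝ) + 1) ≠ 0 := by positivity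
    have h2 : ((m : ℝ) + 1 + 1) ≠ 0 := by positivity
    push_cast
    field_simp
    ring

/-- **Abel-summation size bound.** Let `ρ ≥ 1`, `n > 0`, `κ* ≥ 1` an integer, and let `E'` be
a finite set with strengths `κ : E' → {1, …, κ*}` and weights `w : E' → ℝ_{>0}` satisfying
`w e ≥ κ e / ρ`. If for every `k ∈ {1, …, κ*}` the total weight of
`F_k = {e ∈ E' : κ e ≤ k}` is at most `n·k·(1 + 1/ρ)`, then
`|E'| ≤ n·(ρ+1)·(1 + ∑_{k=1}^{κ*} 1/(k+1))`. -/
theorem card_le_of_strength_weight_bounds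
    {α : Type} (ρ n : ℝ) (hρ : 1 ≤ ρ) (hn : 0 < n)
    (κstar : ℕ) (hκstar : 1 ≤ κstar)
    (E' : Finset α) (κ : α → ℕ) (w : α → ℝ)
    (hκ : ∀ e ∈ E', 1 ≤ κ e ∧ κ e ≤ κstar)
    (hwpos : ∀ e ∈ E', 0 < w e)
    (hw : ∀ e ∈ E', (κ e : ℝ) / ρ ≤ w e)
    (hF : ∀ k ∈ Icc 1 κstar,
      (∑ e ∈ E'.filter (fun e => κ e ≤ k), w e) ≤ n * k * (1 + 1 / ρ)) :
    (E'.card : ℝ) ≤ n * (ρ + 1) * (1 + ∑ k ∈ Icc 1 κstar, 1 / ((k : ℝ) + 1)) := by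
  classical
  have hρ0 : (0 : ℝ) < ρ := lt_of_lt_of_le one_pos hρ
  set C : ℝ := n * (1 + 1 / ρ) with hC
  have hC0 : 0 < C := by positivity
  set T : ℕ → ℝ := fun k => ∑ e ∈ E'.filter (fun e => κ e ≤ k), w e with hT
  have hT0 : T 0 = 0 := by
    simp only [hT]
    rw [Finset.filter_false_of_mem, Finset.sum_empty]
    intro e he
    have := (hκ e he).1
    omega
  -- step relation
  have hstep : ∀ k, T (k + 1) - T k = ∑ e ∈ E'.filter (fun e => κ e = k + 1), w e := by
    intro k
    have hsplit : E'.filter (fun e => κ e ≤ k + 1)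
        = E'.filter (fun e => κ e ≤ k) ∪ E'.filter (fun e => κ e = k + 1) := by
      ext e
      simp only [Finset.mem_filter, Finset.mem_union]
      constructor
      · rintro ⟨he, hk⟩
        rcases Nat.lt_or_ge (κ e) (k + 1) with h | h
        · exact Or.inl ⟨he, by omega⟩
        · exact Or.inr ⟨he, by omega⟩
      · rintro (⟨he, hk⟩ | ⟨he, hk⟩) <;> exact ⟨he, by omega⟩
    have hdisj : Disjoint (E'.filter (fun e => κ e ≤ k)) (E'.filter (fun e => κ e = k + 1)) := by
      simp only [Finset.disjoint_left, Finset.mem_filter]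
      rintro e ⟨_, h1⟩ ⟨_, h2⟩
      omega
    have : T (k + 1) = T k + ∑ e ∈ E'.filter (fun e => κ e = k + 1), w e := by
      simp only [hT]
      rw [hsplit, Finset.sum_union hdisj]
    linarith
  -- card bound by weighted sum
  have h1 : (E'.card : ℝ) ≤ ρ * ∑ e ∈ E', w e / (κ e : ℝ) := by
    have hcard : (E'.card : ℝ) = ∑ e ∈ E', (1 : ℝ) := by simp
    rw [hcard, Finset.mul_sum]
    apply Finset.sum_le_sum
    intro e he
    have hκe : (1 : ℝ) ≤ (κ e : ℝ) := by exact_mod_cast (hκ e he).1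
    have hκpos : (0 : ℝ) < (κ e : ℝ) := lt_of_lt_of_le one_pos hκe
    have hwe := hw e he
    have hkey : (κ e : ℝ) ≤ w e * ρ := (div_le_iff₀ hρ0).mp hwe
    rw [mul_div_assoc', le_div_iff₀ hκpos]
    nlinarith
  -- regroup by fibers
  have h2 : ∑ e ∈ E', w e / (κ e : ℝ)
      = ∑ k ∈ Icc 1 κstar, (T k - T (k - 1)) / (k : ℝ) := by
    rw [← Finset.sum_fiberwise_of_maps_to
        (fun e he => Finset.mem_Icc.mpr ⟨(hκ e he).1, (hκ e he).2⟩)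
        (fun e => w e / (κ e : ℝ))]
    apply Finset.sum_congr rfl
    intro k hk
    have hk1 : 1 ≤ k := (Finset.mem_Icc.mp hk).1
    have hinner : ∑ e ∈ E'.filter (fun e => κ e = k), w e / (κ e : ℝ)
        = (∑ e ∈ E'.filter (fun e => κ e = k), w e) / (k : ℝ) := by
      rw [Finset.sum_div]
      apply Finset.sum_congr rfl
      intro e he
      rw [(Finset.mem_filter.mp he).2]
    rw [hinner]
    congr 1
    obtain ⟨j, rfl⟩ : ∃ j, k = j + 1 := ⟨k - 1, by omega⟩
    rw [show j + 1 - 1 = j from rfl, hstep j]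
  -- the Abel bound
  have h3 : ∑ k ∈ Icc 1 κstar, (T k - T (k - 1)) / (k : ℝ)
      ≤ C * (1 + ∑ k ∈ Icc 1 κstar, 1 / ((k : ℝ) + 1)) := by
    rw [abel_aux T hT0]
    have hTb : ∀ k ∈ Icc 1 κstar, T k ≤ C * k := by
      intro k hk
      have := hF k hk
      simp only [hT]
      calc T k ≤ n * k * (1 + 1 / ρ) := this
        _ = C * k := by ring
    have hterm1 : T κstar / ((κstar : ℝ) + 1) ≤ C := by
      have hb := hTb κstar (Finset.mem_Icc.mpr ⟨hκstar, le_refl _⟩)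
      have hpos : (0 : ℝ) < (κstar : ℝ) + 1 := by positivity
      rw [div_le_iff₀ hpos]
      calc T κstar ≤ C * κstar := hb
        _ ≤ C * ((κstar : ℝ) + 1) := by nlinarith
    have hterm2 : ∑ k ∈ Icc 1 κstar, T k / ((k : ℝ) * ((k : ℝ) + 1))
        ≤ ∑ k ∈ Icc 1 κstar, C * (1 / ((k : ℝ) + 1)) := by
      apply Finset.sum_le_sum
      intro k hk
      have hk1 : 1 ≤ k := (Finset.mem_Icc.mp hk).1
      have hkR : (1 : ℝ) ≤ (k : ℝ) := by exact_mod_cast hk1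
      have hb := hTb k hk
      have hpos : (0 : ℝ) < (k : ℝ) * ((k : ℝ) + 1) := by nlinarith
      rw [div_le_iff₀ hpos]
      have : C * (1 / ((k : ℝ) + 1)) * ((k : ℝ) * ((k : ℝ) + 1)) = C * k := by
        field_simp
      rw [this]
      exact hb
    calc T κstar / ((κstar : ℝ) + 1) + ∑ k ∈ Icc 1 κstar, T k / ((k : ℝ) * ((k : ℝ) + 1))
        ≤ C + ∑ k ∈ Icc 1 κstar, C * (1 / ((k : ℝ) + 1)) := by
          exact add_le_add hterm1 hterm2
      _ = C * (1 + ∑ k ∈ Icc 1 κstar, 1 / ((k : ℝ) + 1)) := by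
          rw [← Finset.mul_sum]; ring
  have hfinal : ρ * C = n * (ρ + 1) := by
    rw [hC]
    field_simp
  calc (E'.card : ℝ) ≤ ρ * ∑ e ∈ E', w e / (κ e : ℝ) := h1
    _ = ρ * ∑ k ∈ Icc 1 κstar, (T k - T (k - 1)) / (k : ℝ) := by rw [h2]
    _ ≤ ρ * (C * (1 + ∑ k ∈ Icc 1 κstar, 1 / ((k : ℝ) + 1))) := by
        apply mul_le_mul_of_nonneg_left h3 (le_of_lt hρ0)
    _ = n * (ρ + 1) * (1 + ∑ k ∈ Icc 1 κstar, 1 / ((k : ℝ) + 1)) := by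
        rw [← mul_assoc, hfinal]
end

section
/- Consider a deterministic incremental weighted hypergraph process on a vertex set V of size n with parameter ρ ≥ 1: hyperedges f_1,…,f_r (each f_j ⊆ V with |f_j| ≥ 2) are inserted in order, and each f_j receives weight w'_{f_j} = max{κ_j/ρ, 1}, where κ_j is the strength of f_j in the weighted hypergraph consisting of f_1,…,f_j with these weights. For κ ≥ 1, let F_κ = {f_j : κ_j ≤ κ}. Then the total weight of F_κ satisfies ∑_{f ∈ F_κ} w'_f ≤ n·κ·(1 + 1/ρ). -/
open Finset

variable {V : Type} [DecidableEq V] [Fintype V]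

/-- Prefix strength lemma: for any `κ' > κ₀` and any vertex set `U`, the total weight of
hyperedges contained in `U` whose insertion-time strength is at most `κ₀` is at most
`κ' * (|U| - 1)`. -/
lemma key_strength_sum {V : Type} [DecidableEq V] [Fintype V]
    (r : ℕ) (f : ℕ → Finset V)
    (hf : ∀ j ∈ Finset.Icc 1 r, 2 ≤ (f j).card)
    (w' κ : ℕ → ℝ)
    (hκ : ∀ j ∈ Finset.Icc 1 r, κ j =
      strength (fun g => ∑ i ∈ Finset.Icc 1 j, if f i = g then w' i else 0) (f j))
    (hw0 : ∀ j ∈ Finset.Icc 1 r, 0 ≤ w' j)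
    (κ₀ κ' : ℝ) (hκ' : κ₀ < κ') (hκ'0 : 0 ≤ κ') :
    ∀ N : ℕ, ∀ U : Finset V, U.card ≤ N → U.Nonempty →
      ∑ j ∈ (Finset.Icc 1 r).filter (fun j => κ j ≤ κ₀ ∧ f j ⊆ U), w' j ≤
        κ' * ((U.card : ℝ) - 1) := by
  classical
  intro N
  induction N with
  | zero =>
    intro U hUc hUne
    exact absurd (Finset.card_pos.2 hUne) (by omega)
  | succ N ih =>
    intro U hUc hUne
    set Fs : Finset ℕ := (Finset.Icc 1 r).filter (fun j => κ j ≤ κ₀ ∧ f j ⊆ U) with hFsdef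
    rcases Finset.eq_empty_or_nonempty Fs with hFe | hFne
    · rw [hFe]
      simp only [Finset.sum_empty]
      have h1 : (1:ℝ) ≤ (U.card : ℝ) := by exact_mod_cast Finset.card_pos.2 hUne
      nlinarith
    · set m := Fs.max' hFne with hmdef
      have hmF : m ∈ Fs := Fs.max'_mem hFne
      have hm1 : m ∈ Finset.Icc 1 r := (Finset.mem_filter.1 hmF).1
      have hmκ : κ m ≤ κ₀ := (Finset.mem_filter.1 hmF).2.1
      have hmU : f m ⊆ U := (Finset.mem_filter.1 hmF).2.2
      set wm : Finset V → ℝ := fun g => ∑ i ∈ Finset.Icc 1 m, if f i = g then w' i else 0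
        with hwm
      have hstr : κ m = strength wm (f m) := hκ m hm1
      -- lambdaVal wm U ≤ κ m
      have hbdd : BddAbove {x : ℝ | ∃ W : Finset V, x = lambdaVal wm (W ∪ f m)} := by
        have hset : {x : ℝ | ∃ W : Finset V, x = lambdaVal wm (W ∪ f m)} =
            Set.range (fun W : Finset V => lambdaVal wm (W ∪ f m)) := by
          ext x; simp [eq_comm, Set.mem_range]
        rw [hset]
        exact (Set.finite_range _).bddAbove
      have hlamle : lambdaVal wm U ≤ κ m := by
        rw [hstr]
        apply le_csSup hbdd
        exact ⟨U, by rw [Finset.union_eq_left.2 hmU]⟩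
      -- the set of normalized cut values of U is nonempty
      obtain ⟨x, hx⟩ := hUne
      have hU2 : 2 ≤ U.card := le_trans (hf m hm1) (Finset.card_le_card hmU)
      have hSne : {t : ℝ | ∃ P : Finset (Finset V), IsPartitionOf U P ∧ 2 ≤ P.card ∧
          t = cutVal wm P / ((P.card : ℝ) - 1)}.Nonempty := by
        have hex : (U.erase x).Nonempty := by
          rw [← Finset.card_pos, Finset.card_erase_of_mem hx]; omega
        have hne2 : ({x} : Finset V) ≠ U.erase x := by
          intro h
          have hxx : x ∈ U.erase x := h ▸ Finset.mem_singleton_self x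
          exact (Finset.notMem_erase x U) hxx
        have hcard2 : ({({x} : Finset V), U.erase x} : Finset (Finset V)).card = 2 := by
          rw [Finset.card_insert_of_notMem (by simpa using hne2), Finset.card_singleton]
        refine ⟨_, {({x} : Finset V), U.erase x}, ⟨?_, ?_, ?_⟩, by rw [hcard2], rfl⟩
        · intro A hA
          rcases Finset.mem_insert.1 hA with h | h
          · exact h ▸ Finset.singleton_nonempty x
          · exact (Finset.mem_singleton.1 h) ▸ hex
        · intro A hA B hB hAB
          simp only [Finset.coe_insert, Set.mem_insert_iff, Finset.coe_singleton,
            Set.mem_singleton_iff] at hA hB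
          rcases hA with rfl | rfl <;> rcases hB with rfl | rfl
          · exact absurd rfl hAB
          · exact Finset.disjoint_singleton_left.2 (Finset.notMem_erase x U)
          · exact (Finset.disjoint_singleton_left.2 (Finset.notMem_erase x U)).symm
          · exact absurd rfl hAB
        · rw [Finset.sup_insert, Finset.sup_singleton]
          simp only [id_eq]
          exact Finset.insert_erase hx
      have hsInf : lambdaVal wm U < κ' := lt_of_le_of_lt hlamle (lt_of_le_of_lt hmκ hκ')
      rw [lambdaVal] at hsInf
      obtain ⟨t, ht, htlt⟩ := exists_lt_of_csInf_lt hSne hsInf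
      obtain ⟨P, hPart, hP2, htval⟩ := ht
      have hk1 : (0:ℝ) < (P.card : ℝ) - 1 := by
        have h2 : (2:ℝ) ≤ (P.card : ℝ) := by exact_mod_cast hP2
        linarith
      have hcutlt : cutVal wm P < κ' * ((P.card : ℝ) - 1) := by
        rw [htval] at htlt
        calc cutVal wm P = cutVal wm P / ((P.card:ℝ)-1) * ((P.card:ℝ)-1) := by
              field_simp
        _ < κ' * ((P.card:ℝ)-1) := mul_lt_mul_of_pos_right htlt hk1
      obtain ⟨hPne, hPdisj, hPsup⟩ := hPart
      have hAsub : ∀ A ∈ P, A ⊆ U := fun A hA => by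
        have := Finset.le_sup (f := id) hA
        rw [hPsup] at this
        exact this
      have hcardsum : ∑ A ∈ P, A.card = U.card := by
        have hb : (P.biUnion id).card = ∑ A ∈ P, (id A).card :=
          Finset.card_biUnion (fun A hA B hB hAB =>
            hPdisj (Finset.mem_coe.2 hA) (Finset.mem_coe.2 hB) hAB)
        rw [← Finset.sup_eq_biUnion, hPsup] at hb
        exact hb.symm
      have hAlt : ∀ A ∈ P, A.card < U.card := by
        intro A hA
        obtain ⟨B, hB, hBA⟩ := Finset.exists_mem_ne (s := P) (by omega) A
        obtain ⟨b, hb⟩ := hPne B hB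
        refine Finset.card_lt_card ⟨hAsub A hA, fun hsub => ?_⟩
        have hbU : b ∈ U := hAsub B hB hb
        have hba : b ∈ A := hsub hbU
        exact (Finset.disjoint_left.1
          (hPdisj (Finset.mem_coe.2 hB) (Finset.mem_coe.2 hA) hBA) hb) hba
      -- split the sum into cut edges and edges inside parts
      have hsplit := Finset.sum_filter_add_sum_filter_not Fs (fun j => ∀ A ∈ P, ¬ f j ⊆ A) w'
      -- the cut edges
      set G : Finset (Finset V) :=
        Finset.univ.filter (fun g : Finset V => g ⊆ P.sup id ∧ ∀ A ∈ P, ¬ g ⊆ A) with hGdef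
      have hcutval : cutVal wm P = ∑ i ∈ Finset.Icc 1 m, (if f i ∈ G then w' i else 0) := by
        rw [cutVal, ← hGdef]
        rw [Finset.sum_comm]
        apply Finset.sum_congr rfl
        intro i _
        exact Finset.sum_ite_eq G (f i) (fun _ => w' i)
      have hmr : m ≤ r := (Finset.mem_Icc.1 hm1).2
      have hcutpart : ∑ j ∈ Fs.filter (fun j => ∀ A ∈ P, ¬ f j ⊆ A), w' j ≤ cutVal wm P := by
        rw [hcutval]
        have hsub : Fs.filter (fun j => ∀ A ∈ P, ¬ f j ⊆ A) ⊆ Finset.Icc 1 m := by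
          intro j hj
          have hjF : j ∈ Fs := Finset.mem_of_mem_filter j hj
          have hj1 : 1 ≤ j := (Finset.mem_Icc.1 (Finset.mem_filter.1 hjF).1).1
          exact Finset.mem_Icc.2 ⟨hj1, Fs.le_max' j hjF⟩
        calc ∑ j ∈ Fs.filter (fun j => ∀ A ∈ P, ¬ f j ⊆ A), w' j
            = ∑ j ∈ Fs.filter (fun j => ∀ A ∈ P, ¬ f j ⊆ A), (if f j ∈ G then w' j else 0) := by
              apply Finset.sum_congr rfl
              intro j hj
              rw [if_pos]
              rw [hGdef, Finset.mem_filter]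
              refine ⟨Finset.mem_univ _, ?_, (Finset.mem_filter.1 hj).2⟩
              rw [hPsup]
              exact (Finset.mem_filter.1 (Finset.mem_of_mem_filter j hj)).2.2
        _ ≤ ∑ i ∈ Finset.Icc 1 m, (if f i ∈ G then w' i else 0) := by
              apply Finset.sum_le_sum_of_subset_of_nonneg hsub
              intro i hi _
              by_cases h : f i ∈ G
              · rw [if_pos h]
                exact hw0 i (Finset.mem_Icc.2 ⟨(Finset.mem_Icc.1 hi).1,
                  le_trans (Finset.mem_Icc.1 hi).2 hmr⟩)
              · rw [if_neg h]
      -- the edges inside parts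
      have hdisjpieces : (↑P : Set (Finset V)).PairwiseDisjoint
          (fun A => (Finset.Icc 1 r).filter (fun j => κ j ≤ κ₀ ∧ f j ⊆ A)) := by
        intro A hA B hB hAB
        simp only [Function.onFun]
        rw [Finset.disjoint_left]
        intro j hjA hjB
        have hjr : j ∈ Finset.Icc 1 r := (Finset.mem_filter.1 hjA).1
        have hfj : (f j).Nonempty := Finset.card_pos.1 (by have := hf j hjr; omega)
        obtain ⟨y, hy⟩ := hfj
        exact (Finset.disjoint_left.1 (hPdisj hA hB hAB)
          ((Finset.mem_filter.1 hjA).2.2 hy)) ((Finset.mem_filter.1 hjB).2.2 hy)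
      have hbi : Fs.filter (fun j => ¬ ∀ A ∈ P, ¬ f j ⊆ A) =
          P.biUnion (fun A => (Finset.Icc 1 r).filter (fun j => κ j ≤ κ₀ ∧ f j ⊆ A)) := by
        ext j
        simp only [Finset.mem_biUnion, Finset.mem_filter, hFsdef]
        constructor
        · rintro ⟨⟨hjr, hjκ, _⟩, h⟩
          push_neg at h
          obtain ⟨A, hA, hfA⟩ := h
          exact ⟨A, hA, ⟨hjr, hjκ, hfA⟩⟩
        · rintro ⟨A, hA, hjr, hjκ, hfA⟩
          refine ⟨⟨hjr, hjκ, hfA.trans (hAsub A hA)⟩, ?_⟩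
          push_neg
          exact ⟨A, hA, hfA⟩
      have hinpart : ∑ j ∈ Fs.filter (fun j => ¬ ∀ A ∈ P, ¬ f j ⊆ A), w' j ≤
          κ' * ((U.card : ℝ) - (P.card : ℝ)) := by
        rw [hbi, Finset.sum_biUnion hdisjpieces]
        calc ∑ A ∈ P, ∑ j ∈ (Finset.Icc 1 r).filter (fun j => κ j ≤ κ₀ ∧ f j ⊆ A), w' j
            ≤ ∑ A ∈ P, κ' * ((A.card : ℝ) - 1) := by
              apply Finset.sum_le_sum
              intro A hA
              rcases Finset.eq_empty_or_nonempty
                  ((Finset.Icc 1 r).filter (fun j => κ j ≤ κ₀ ∧ f j ⊆ A)) with he | hne'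
              · rw [he]
                simp only [Finset.sum_empty]
                have h1 : (1:ℝ) ≤ (A.card : ℝ) := by
                  exact_mod_cast Finset.card_pos.2 (hPne A hA)
                nlinarith
              · exact ih A (by have := hAlt A hA; omega) (hPne A hA)
        _ = κ' * ((U.card : ℝ) - (P.card : ℝ)) := by
              rw [← Finset.mul_sum]
              congr 1
              rw [Finset.sum_sub_distrib, Finset.sum_const, nsmul_eq_mul, mul_one]
              rw [← Nat.cast_sum, hcardsum]
      have hring : κ' * ((P.card:ℝ) - 1) + κ' * ((U.card:ℝ) - (P.card:ℝ)) =
          κ' * ((U.card:ℝ) - 1) := by ring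
      linarith [hsplit, hcutpart, hcutlt, hinpart]

/-- **Total weight of low-strength sampled hyperedges.**
In the deterministic incremental weighted hypergraph process with parameter `ρ ≥ 1`,
hyperedges `f 1, …, f r` are inserted in order, the `j`-th receiving weight
`w' j = max (κ j / ρ) 1`, where `κ j` is the strength of `f j` in the weighted hypergraph
consisting of `f 1, …, f j` with these weights. Then for every `κ₀ ≥ 1` the total weight of
`F_{κ₀} = {f j : κ j ≤ κ₀}` is at most `n·κ₀·(1 + 1/ρ)`. -/
theorem total_weight_low_strength_le
    {V : Type} [DecidableEq V] [Fintype V]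
    (ρ : ℝ) (hρ : 1 ≤ ρ) (r : ℕ) (f : ℕ → Finset V)
    (hf : ∀ j ∈ Finset.Icc 1 r, 2 ≤ (f j).card)
    (w' κ : ℕ → ℝ)
    (hκ : ∀ j ∈ Finset.Icc 1 r, κ j =
      strength (fun g => ∑ i ∈ Finset.Icc 1 j, if f i = g then w' i else 0) (f j))
    (hw' : ∀ j ∈ Finset.Icc 1 r, w' j = max (κ j / ρ) 1)
    (κ₀ : ℝ) (hκ₀ : 1 ≤ κ₀) :
    (∑ j ∈ Finset.Icc 1 r, Set.indicator {j' | κ j' ≤ κ₀} w' j) ≤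
      (Fintype.card V : ℝ) * κ₀ * (1 + 1 / ρ) := by
  classical
  have hρ0 : (0:ℝ) < ρ := lt_of_lt_of_le zero_lt_one hρ
  have hinv : (0:ℝ) ≤ 1 / ρ := by positivity
  have hw0 : ∀ j ∈ Finset.Icc 1 r, 0 ≤ w' j := fun j hj => by
    rw [hw' j hj]
    exact le_trans zero_le_one (le_max_right _ _)
  have hrw : (∑ j ∈ Finset.Icc 1 r, Set.indicator {j' | κ j' ≤ κ₀} w' j) =
      ∑ j ∈ (Finset.Icc 1 r).filter
        (fun j => κ j ≤ κ₀ ∧ f j ⊆ (Finset.univ : Finset V)), w' j := by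
    rw [Finset.sum_filter]
    apply Finset.sum_congr rfl
    intro j _
    simp [Set.indicator_apply, Finset.subset_univ]
  rw [hrw]
  rcases Finset.eq_empty_or_nonempty (Finset.univ : Finset V) with huniv | huniv
  · have hicc : ∀ j ∈ (Finset.Icc 1 r).filter
        (fun j => κ j ≤ κ₀ ∧ f j ⊆ (Finset.univ : Finset V)), w' j = 0 := by
      intro j hj
      have hjr : j ∈ Finset.Icc 1 r := Finset.mem_of_mem_filter j hj
      have h2 : 2 ≤ (f j).card := hf j hjr
      have : f j ⊆ (∅ : Finset V) := huniv ▸ Finset.subset_univ (f j)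
      rw [Finset.subset_empty] at this
      rw [this] at h2
      simp at h2
    rw [Finset.sum_eq_zero hicc]
    have hcv : (0:ℝ) ≤ (Fintype.card V : ℝ) := Nat.cast_nonneg _
    have h0 : (0:ℝ) ≤ (Fintype.card V : ℝ) * κ₀ * (1 + 1 / ρ) :=
      mul_nonneg (mul_nonneg hcv (by linarith)) (by linarith)
    linarith
  · set nR : ℝ := (Fintype.card V : ℝ) with hnR
    have hn1 : (1:ℝ) ≤ nR := by
      rw [hnR]
      exact_mod_cast Fintype.card_pos_iff.2 ⟨huniv.choose⟩
    have hmain : ∑ j ∈ (Finset.Icc 1 r).filter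
        (fun j => κ j ≤ κ₀ ∧ f j ⊆ (Finset.univ : Finset V)), w' j ≤ κ₀ * (nR - 1) := by
      apply le_of_forall_pos_le_add
      intro ε hε
      have hκ' : κ₀ < κ₀ + ε / nR := by
        have : (0:ℝ) < ε / nR := by positivity
        linarith
      have hκ'0 : (0:ℝ) ≤ κ₀ + ε / nR := by
        have : (0:ℝ) < ε / nR := by positivity
        linarith
      have hkey := key_strength_sum r f hf w' κ hκ hw0 κ₀ (κ₀ + ε / nR) hκ' hκ'0
        (Finset.univ.card) Finset.univ le_rfl huniv
      have hcards : ((Finset.univ : Finset V).card : ℝ) = nR := by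
        rw [hnR, Finset.card_univ]
      rw [hcards] at hkey
      have harith : (κ₀ + ε / nR) * (nR - 1) ≤ κ₀ * (nR - 1) + ε := by
        have h1 : ε / nR * (nR - 1) ≤ ε := by
          rw [div_mul_eq_mul_div]
          rw [div_le_iff₀ (by linarith : (0:ℝ) < nR)]
          nlinarith
        nlinarith
      linarith
    have hfinal : κ₀ * (nR - 1) ≤ nR * κ₀ * (1 + 1 / ρ) := by
      have h1 : nR * κ₀ * (1 + 1 / ρ) ≥ nR * κ₀ := by
        nlinarith [mul_nonneg (mul_nonneg (by linarith : (0:ℝ) ≤ nR)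
          (by linarith : (0:ℝ) ≤ κ₀)) hinv]
      nlinarith
    linarith
end
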